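/- Let v : [0,π] → ℝ be continuous. For each λ ∈ ℝ the function d(λ) = y₁(π,λ) is differentiable in λ and its derivative is given by d'(λ) = ∫₀^π y₁(x,λ) y₂(x,λ) dx. -/

import Mathlib

/-!
Green's identity for the Wronskian `W = y₁(·,μ) y₂'(·,λ) - y₁'(·,μ) y₂(·,λ)`, whose derivative is
`(μ - λ) y₁(·,μ) y₂(·,λ)`, evaluated with the boundary conditions, gives
`d(μ) - d(λ) = (μ - λ) ∫₀^π y₁(x,μ) y₂(x,λ) dx`. So the difference quotient of `d` is this
integral, which tends to `∫₀^π y₁(x,λ) y₂(x,λ) dx` because `y₁(·,μ) → y₁(·,λ)` uniformly on `[0,π]`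
as `μ → λ`, by Grönwall's inequality.
-/

open Real Set MeasureTheory intervalIntegral Filter Topology

theorem hasDerivAt_of_sub_eq_smul {𝕜 F : Type*} [NontriviallyNormedField 𝕜] [NormedAddCommGroup F]
    [NormedSpace 𝕜 F] {f g : 𝕜 → F} {x : 𝕜} (hf : ∀ y, f y - f x = (y - x) • g y)
    (hg : ContinuousAt g x) : HasDerivAt f (g x) x := by
  rw [hasDerivAt_iff_tendsto_slope]
  refine (hg.tendsto.mono_left nhdsWithin_le_nhds).congr' ?_
  filter_upwards [self_mem_nhdsWithin] with y hy
  rw [slope_def_module, hf, smul_smul, inv_mul_cancel₀ (sub_ne_zero.mpr hy), one_smul]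

theorem TendstoUniformlyOn.mul_right_of_abs_le {ι α : Type*} {p : Filter ι} {F : ι → α → ℝ}
    {f g : α → ℝ} {s : Set α} {C : ℝ} (hF : TendstoUniformlyOn F f p s)
    (hg : ∀ x ∈ s, |g x| ≤ C) :
    TendstoUniformlyOn (fun i x => F i x * g x) (fun x => f x * g x) p s := by
  rw [Metric.tendstoUniformlyOn_iff] at hF ⊢
  intro ε hε
  have hC : 0 < |C| + 1 := by positivity
  filter_upwards [hF (ε / (|C| + 1)) (by positivity)] with i hi x hx
  have hgx : |g x| ≤ |C| + 1 := by linarith [hg x hx, le_abs_self C]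
  calc dist (f x * g x) (F i x * g x) = dist (f x) (F i x) * |g x| := by
        rw [Real.dist_eq, Real.dist_eq, ← sub_mul, abs_mul]
    _ ≤ dist (f x) (F i x) * (|C| + 1) := by gcongr
    _ < ε / (|C| + 1) * (|C| + 1) := by gcongr; exact hi x hx
    _ = ε := div_mul_cancel₀ ε hC.ne'

theorem Prod.norm_snd_mul_add_le {p q c d m K M : ℝ} (hK : 1 ≤ K) (hc : |c| ≤ K)
    (hm : |m| ≤ M) : ‖(q, c * p + d * m)‖ ≤ K * ‖(p, q)‖ + |d| * M := by
  have hpq : |p| ≤ ‖(p, q)‖ ∧ |q| ≤ ‖(p, q)‖ := ⟨norm_fst_le (p, q), norm_snd_le (p, q)⟩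
  have hdM : 0 ≤ |d| * M := mul_nonneg (abs_nonneg d) ((abs_nonneg m).trans hm)
  rw [Prod.norm_def]
  refine max_le ?_ ?_
  · change |q| ≤ _
    nlinarith [norm_nonneg (p, q)]
  · change |c * p + d * m| ≤ _
    calc |c * p + d * m| ≤ |c| * |p| + |d| * |m| := by
          rw [← abs_mul, ← abs_mul]; exact abs_add_le _ _
      _ ≤ K * ‖(p, q)‖ + |d| * M := by
          gcongr
          exact hpq.1

/-- `(y, y')` solves `-y'' + v y = μ y` on `s`. -/
structure IsSturmLiouvilleSolution (v : ℝ → ℝ) (μ : ℝ) (s : Set ℝ) (y y' : ℝ → ℝ) : Prop where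
  hasDerivWithinAt : ∀ x ∈ s, HasDerivWithinAt y (y' x) s x
  hasDerivWithinAt_deriv : ∀ x ∈ s, HasDerivWithinAt y' ((v x - μ) * y x) s x

def wronskian (u u' w w' : ℝ → ℝ) (x : ℝ) : ℝ := u x * w' x - u' x * w x

namespace IsSturmLiouvilleSolution

variable {v : ℝ → ℝ} {μ l a b : ℝ} {s : Set ℝ} {u u' w w' : ℝ → ℝ}

theorem continuousOn (hu : IsSturmLiouvilleSolution v μ s u u') : ContinuousOn u s :=
  fun x hx => (hu.hasDerivWithinAt x hx).continuousWithinAt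

theorem hasDerivWithinAt_wronskian (hu : IsSturmLiouvilleSolution v μ s u u')
    (hw : IsSturmLiouvilleSolution v l s w w') {x : ℝ} (hx : x ∈ s) :
    HasDerivWithinAt (wronskian u u' w w') ((μ - l) * (u x * w x)) s x :=
  (((hu.hasDerivWithinAt x hx).mul (hw.hasDerivWithinAt_deriv x hx)).sub
    ((hu.hasDerivWithinAt_deriv x hx).mul (hw.hasDerivWithinAt x hx))).congr_deriv (by ring)

theorem wronskian_sub_wronskian (hu : IsSturmLiouvilleSolution v μ (Icc a b) u u')
    (hw : IsSturmLiouvilleSolution v l (Icc a b) w w') (hab : a ≤ b) :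
    wronskian u u' w w' b - wronskian u u' w w' a = (μ - l) * ∫ x in a..b, u x * w x := by
  have hint : IntervalIntegrable (fun x => u x * w x) volume a b :=
    (hu.continuousOn.mul hw.continuousOn).intervalIntegrable_of_Icc hab
  rw [← intervalIntegral.integral_const_mul]
  refine (integral_eq_sub_of_hasDerivAt_of_le hab
    (fun x hx => (hu.hasDerivWithinAt_wronskian hw hx).continuousWithinAt)
    (fun x hx => ?_) (hint.const_mul _)).symm
  exact (hu.hasDerivWithinAt_wronskian hw (Ioo_subset_Icc_self hx)).hasDerivAt
    (Icc_mem_nhds hx.1 hx.2)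

/-- `u - w` solves the inhomogeneous equation `f'' = (v - μ) f + (λ - μ) w`, whose forcing term
is small when `μ` is close to `λ`. -/
theorem abs_sub_le_gronwallBound (hu : IsSturmLiouvilleSolution v μ (Icc a b) u u')
    (hw : IsSturmLiouvilleSolution v l (Icc a b) w w') (ha : u a = w a) (ha' : u' a = w' a)
    {K M : ℝ} (hK : 1 ≤ K) (hvK : ∀ x ∈ Icc a b, |v x - μ| ≤ K)
    (hwM : ∀ x ∈ Icc a b, |w x| ≤ M) :
    ∀ x ∈ Icc a b, |u x - w x| ≤ gronwallBound 0 K (|μ - l| * M) (x - a) := by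
  set f : ℝ → ℝ × ℝ := fun x => (u x - w x, u' x - w' x)
  set f' : ℝ → ℝ × ℝ := fun x => (u' x - w' x, (v x - μ) * (u x - w x) + (l - μ) * w x)
  have hf : ∀ x ∈ Icc a b, HasDerivWithinAt f (f' x) (Icc a b) x := fun x hx =>
    (((hu.hasDerivWithinAt x hx).sub (hw.hasDerivWithinAt x hx)).prodMk
      ((hu.hasDerivWithinAt_deriv x hx).sub (hw.hasDerivWithinAt_deriv x hx))).congr_deriv
      (Prod.ext rfl (by simp only [f']; ring))
  have hf_right : ∀ x ∈ Ico a b, HasDerivWithinAt f (f' x) (Ici x) x := fun x hx =>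
    (hf x (Ico_subset_Icc_self hx)).mono_of_mem_nhdsWithin (Icc_mem_nhdsGE_of_mem hx)
  have hfa : ‖f a‖ ≤ 0 := by simp [f, ha, ha']
  have hf'_le : ∀ x ∈ Ico a b, ‖f' x‖ ≤ K * ‖f x‖ + |μ - l| * M := fun x hx => by
    rw [abs_sub_comm]
    exact Prod.norm_snd_mul_add_le hK (hvK x (Ico_subset_Icc_self hx))
      (hwM x (Ico_subset_Icc_self hx))
  intro x hx
  exact (norm_fst_le (f x)).trans (norm_le_gronwallBound_of_norm_deriv_right_le
    (fun x hx => (hf x hx).continuousWithinAt) hf_right hfa hf'_le x hx)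

theorem tendstoUniformlyOn {y y' : ℝ → ℝ → ℝ} (hv : ContinuousOn v (Icc a b)) (hab : a ≤ b)
    (hy : ∀ μ, IsSturmLiouvilleSolution v μ (Icc a b) (y μ) (y' μ))
    (ha : ∀ μ, y μ a = y l a) (ha' : ∀ μ, y' μ a = y' l a) :
    TendstoUniformlyOn y (y l) (𝓝 l) (Icc a b) := by
  obtain ⟨C, hC⟩ := isCompact_Icc.exists_bound_of_continuousOn hv
  obtain ⟨M, hM⟩ := isCompact_Icc.exists_bound_of_continuousOn (hy l).continuousOn
  simp only [Real.norm_eq_abs] at hC hM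
  have hM0 : 0 ≤ M := (abs_nonneg _).trans (hM a (left_mem_Icc.mpr hab))
  set K := C + |l| + 1
  have hK : 1 ≤ K := by linarith [(abs_nonneg _).trans (hC a (left_mem_Icc.mpr hab)), abs_nonneg l]
  have hsmall : Tendsto (fun μ => gronwallBound 0 K (|μ - l| * M) (b - a)) (𝓝 l) (𝓝 0) := by
    have hε : Continuous fun μ : ℝ => |μ - l| * M := by fun_prop
    have := ((gronwallBound_continuous_ε 0 K (b - a)).comp hε).tendsto l
    simpa [Function.comp_def, gronwallBound_ε0_δ0] using this
  rw [Metric.tendstoUniformlyOn_iff]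
  intro ε hε
  filter_upwards [Metric.closedBall_mem_nhds l one_pos, hsmall.eventually (gt_mem_nhds hε)]
    with μ hμ hμε x hx
  have hvK : ∀ x ∈ Icc a b, |v x - μ| ≤ K := fun x hx => by
    have hμl : |μ| ≤ |l| + 1 := by
      have := abs_sub_abs_le_abs_sub μ l
      rw [Metric.mem_closedBall, Real.dist_eq] at hμ
      linarith
    linarith [abs_sub (v x) μ, hC x hx]
  rw [Real.dist_eq, abs_sub_comm]
  calc |y μ x - y l x| ≤ gronwallBound 0 K (|μ - l| * M) (x - a) :=
        abs_sub_le_gronwallBound (hy μ) (hy l) (ha μ) (ha' μ) hK hvK hM x hx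
    _ ≤ gronwallBound 0 K (|μ - l| * M) (b - a) :=
        gronwallBound_mono le_rfl (by positivity) (by linarith) (by linarith [hx.2])
    _ < ε := hμε

end IsSturmLiouvilleSolution

theorem characteristic_determinant_deriv
    (v : ℝ → ℝ) (hv : ContinuousOn v (Icc (0:ℝ) π))
    (y₁ y₁' y₂ y₂' : ℝ → ℝ → ℝ)
    (hy₁ : ∀ l : ℝ, ∀ x ∈ Icc (0:ℝ) π, HasDerivWithinAt (y₁ l) (y₁' l x) (Icc (0:ℝ) π) x)
    (hy₁' : ∀ l : ℝ, ∀ x ∈ Icc (0:ℝ) π,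
      HasDerivWithinAt (y₁' l) ((v x - l) * y₁ l x) (Icc (0:ℝ) π) x)
    (h10 : ∀ l : ℝ, y₁ l 0 = 0) (h11 : ∀ l : ℝ, y₁' l 0 = 1)
    (hy₂ : ∀ l : ℝ, ∀ x ∈ Icc (0:ℝ) π, HasDerivWithinAt (y₂ l) (y₂' l x) (Icc (0:ℝ) π) x)
    (hy₂' : ∀ l : ℝ, ∀ x ∈ Icc (0:ℝ) π,
      HasDerivWithinAt (y₂' l) ((v x - l) * y₂ l x) (Icc (0:ℝ) π) x)
    (h20 : ∀ l : ℝ, y₂ l π = 0) (h21 : ∀ l : ℝ, y₂' l π = 1) :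
    ∀ l : ℝ, HasDerivAt (fun μ : ℝ => y₁ μ π) (∫ x in (0:ℝ)..π, y₁ l x * y₂ l x) l := by
  intro l
  have sol₁ : ∀ μ, IsSturmLiouvilleSolution v μ (Icc 0 π) (y₁ μ) (y₁' μ) :=
    fun μ => ⟨hy₁ μ, hy₁' μ⟩
  have sol₂ : IsSturmLiouvilleSolution v l (Icc 0 π) (y₂ l) (y₂' l) := ⟨hy₂ l, hy₂' l⟩
  have green : ∀ μ, y₁ μ π + y₂ l 0 = (μ - l) * ∫ x in (0:ℝ)..π, y₁ μ x * y₂ l x := fun μ => by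
    simpa [wronskian, h10, h11, h20, h21] using (sol₁ μ).wronskian_sub_wronskian sol₂ pi_nonneg
  refine hasDerivAt_of_sub_eq_smul (g := fun μ => ∫ x in (0:ℝ)..π, y₁ μ x * y₂ l x)
    (fun μ => ?_) ?_
  · have := green l
    rw [sub_self, zero_mul] at this
    rw [smul_eq_mul, ← green μ]
    linarith
  · obtain ⟨M, hM⟩ := isCompact_Icc.exists_bound_of_continuousOn sol₂.continuousOn
    simp only [Real.norm_eq_abs] at hM
    have hunif := (IsSturmLiouvilleSolution.tendstoUniformlyOn (l := l) hv pi_nonneg sol₁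
      (fun μ => by rw [h10, h10]) (fun μ => by rw [h11, h11])).mul_right_of_abs_le hM
    rw [← uIcc_of_le pi_nonneg] at hunif
    refine hunif.tendsto_intervalIntegral_of_continuousOn (Eventually.of_forall fun μ => ?_)
    rw [uIcc_of_le pi_nonneg]
    exact (sol₁ μ).continuousOn.mul sol₂.continuousOn
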